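/- arXiv:math/0007172 — 3 statements merged into one kernel-verified Lean document; each statement's English description precedes it below -/
import Mathlib

section
/- The numerical range of any bounded linear operator T on a complex Hilbert space is a convex subset of the complex plane (Toeplitz–Hausdorff theorem). -/
open Complex Set

-- Core lemma: if 0 and 1 are in the numerical range, so is every a ∈ [0,1].
lemma th_core {H : Type*} [NormedAddCommGroup H] [InnerProductSpace ℂ H]
    (S : H →L[ℂ] H) (f g : H) (hf : ‖f‖ = 1) (hg : ‖g‖ = 1)
    (h0 : @inner ℂ H _ (S f) f = 0) (h1 : @inner ℂ H _ (S g) g = 1)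
    (a : ℝ) (ha0 : 0 ≤ a) (ha1 : a ≤ 1) :
    ∃ u : H, ‖u‖ = 1 ∧ @inner ℂ H _ (S u) u = (a : ℂ) := by
  classical
  set A : ℂ := @inner ℂ H _ (S f) g with hA
  set B : ℂ := @inner ℂ H _ (S g) f with hB
  set v : ℂ := A - starRingEnd ℂ B with hv
  set c : ℂ := if v = 0 then 1 else v / ‖v‖ with hc
  have hcn : ‖c‖ = 1 := by
    by_cases h : v = 0
    · simp [hc, h]
    · simp [hc, h, norm_div, norm_ne_zero_iff.mpr h]
  obtain ⟨r, hr⟩ : ∃ r : ℝ, starRingEnd ℂ c * A + c * B = (r : ℂ) := by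
    have hsplit : starRingEnd ℂ c * A + c * B
        = starRingEnd ℂ c * v + (starRingEnd ℂ (c * B) + c * B) := by
      simp only [hv, map_mul, map_sub, Complex.conj_conj]; ring
    have h2 : starRingEnd ℂ (c * B) + c * B = ((2 * (c * B).re : ℝ) : ℂ) := by
      rw [add_comm, Complex.add_conj]
    by_cases h : v = 0
    · refine ⟨2 * (c * B).re, ?_⟩
      rw [hsplit, h, mul_zero, zero_add, h2]
    · refine ⟨‖v‖ + 2 * (c * B).re, ?_⟩
      have hvne : ((‖v‖ : ℝ) : ℂ) ≠ 0 := by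
        exact_mod_cast norm_ne_zero_iff.mpr h
      have h1' : starRingEnd ℂ c * v = (‖v‖ : ℂ) := by
        rw [hc, if_neg h, map_div₀, Complex.conj_ofReal, div_mul_eq_mul_div,
          Complex.conj_mul', sq, mul_div_assoc, div_self hvne, mul_one]
      rw [hsplit, h1', h2]; push_cast; ring
  set f' : H := c • f with hf'def
  have hf' : ‖f'‖ = 1 := by rw [hf'def, norm_smul, hcn, hf, one_mul]
  have h0' : @inner ℂ H _ (S f') f' = 0 := by
    rw [hf'def, map_smul, inner_smul_left, inner_smul_right, h0, mul_zero, mul_zero]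
  have hA' : @inner ℂ H _ (S f') g = starRingEnd ℂ c * A := by
    rw [hf'def, map_smul, inner_smul_left, hA]
  have hB' : @inner ℂ H _ (S g) f' = c * B := by
    rw [hf'def, inner_smul_right, hB]
  set p : ℝ → H := fun t => ((1 - t : ℝ) : ℂ) • f' + ((t : ℝ) : ℂ) • g with hp
  have hE : ∀ t : ℝ, @inner ℂ H _ (S (p t)) (p t) = ((t * (1 - t) * r + t ^ 2 : ℝ) : ℂ) := by
    intro t
    simp only [hp, map_add, map_smul, inner_add_left, inner_add_right,
      inner_smul_left, inner_smul_right, Complex.conj_ofReal, h0', hA', hB', h1]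
    push_cast
    linear_combination (t - t ^ 2 : ℂ) * hr
  have hpne : ∀ t : ℝ, t ∈ Icc (0:ℝ) 1 → p t ≠ 0 := by
    intro t ht hzero
    by_cases h : t = 0
    · rw [h] at hzero
      simp only [hp] at hzero
      push_cast at hzero
      simp only [sub_zero, one_smul, zero_smul, add_zero] at hzero
      rw [hzero] at hf'
      simp at hf'
    · have ht' : ((t : ℝ) : ℂ) ≠ 0 := by exact_mod_cast h
      have h2 : ((t : ℝ) : ℂ) • g = -(((1 - t : ℝ) : ℂ) • f') := by
        rw [eq_neg_iff_add_eq_zero, add_comm]; exact hzero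
      have hgf : g = ((-((1 - t : ℝ) : ℂ)) / t) • f' := by
        calc g = ((t:ℂ))⁻¹ • (((t:ℂ)) • g) := by
              rw [smul_smul, inv_mul_cancel₀ ht', one_smul]
          _ = ((-((1 - t : ℝ) : ℂ)) / t) • f' := by
              rw [h2, smul_neg, smul_smul, ← neg_smul]
              congr 1
              field_simp
      have : @inner ℂ H _ (S g) g = 0 := by
        rw [hgf, map_smul, inner_smul_left, inner_smul_right, h0', mul_zero, mul_zero]
      rw [this] at h1
      exact zero_ne_one h1
  have hpcont : Continuous p := by
    refine Continuous.add (Continuous.smul ?_ continuous_const)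
      (Continuous.smul ?_ continuous_const)
    · exact Complex.continuous_ofReal.comp (continuous_const.sub continuous_id)
    · exact Complex.continuous_ofReal
  set q : ℝ → ℝ := fun t => (t * (1 - t) * r + t ^ 2) / ‖p t‖ ^ 2 with hq
  have hqcont : ContinuousOn q (Icc (0:ℝ) 1) := by
    apply ContinuousOn.div
    · fun_prop
    · exact ((hpcont.norm.pow 2)).continuousOn
    · intro t ht
      exact pow_ne_zero 2 (norm_ne_zero_iff.mpr (hpne t ht))
  have hq0 : q 0 = 0 := by simp [hq]
  have hq1 : q 1 = 1 := by
    have hp1 : p 1 = g := by simp [hp]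
    simp [hq, hp1, hg]
  obtain ⟨t, ht, hqt⟩ : ∃ t ∈ Icc (0:ℝ) 1, q t = a := by
    have hIVT := intermediate_value_Icc (by norm_num : (0:ℝ) ≤ 1) hqcont
    rw [hq0, hq1] at hIVT
    obtain ⟨t, ht, hqt⟩ := hIVT ⟨ha0, ha1⟩
    exact ⟨t, ht, hqt⟩
  have hnt : ‖p t‖ ≠ 0 := norm_ne_zero_iff.mpr (hpne t ht)
  have hntC : ((‖p t‖ : ℝ) : ℂ) ≠ 0 := by exact_mod_cast hnt
  have hnum : t * (1 - t) * r + t ^ 2 = a * ‖p t‖ ^ 2 := by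
    have h' := hqt
    simp only [hq] at h'
    rw [div_eq_iff (pow_ne_zero 2 hnt)] at h'
    exact h'
  refine ⟨((‖p t‖ : ℝ) : ℂ)⁻¹ • p t, ?_, ?_⟩
  · rw [norm_smul, norm_inv, Complex.norm_real, Real.norm_eq_abs,
      _root_.abs_of_nonneg (norm_nonneg _), inv_mul_cancel₀ hnt]
  · rw [map_smul, inner_smul_left, inner_smul_right, hE t, map_inv₀,
      Complex.conj_ofReal, hnum]
    push_cast
    rw [sq]
    field_simp

/-- Toeplitz–Hausdorff: the numerical range of a bounded operator is convex. -/
theorem stmt_1 {H : Type*} [NormedAddCommGroup H] [InnerProductSpace ℂ H]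
    (T : H →L[ℂ] H) :
    Convex ℝ {z : ℂ | ∃ f : H, ‖f‖ = 1 ∧ z = @inner ℂ H _ (T f) f} := by
  rintro z ⟨f, hf, hz⟩ w ⟨g, hg, hw⟩ a b ha hb hab
  by_cases hzw : z = w
  · refine ⟨f, hf, ?_⟩
    rw [← hzw, ← add_smul, hab, one_smul]
    exact hz
  · set S : H →L[ℂ] H :=
      (starRingEnd ℂ (z - w)⁻¹) • T
        - (starRingEnd ℂ (w * (z - w)⁻¹)) • ContinuousLinearMap.id ℂ H with hS
    have hSval : ∀ u : H, ‖u‖ = 1 →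
        @inner ℂ H _ (S u) u = (@inner ℂ H _ (T u) u - w) * (z - w)⁻¹ := by
      intro u hu
      have huu : @inner ℂ H _ u u = (1 : ℂ) := by
        rw [inner_self_eq_norm_sq_to_K, hu]; norm_num
      simp only [hS, ContinuousLinearMap.sub_apply, ContinuousLinearMap.smul_apply,
        ContinuousLinearMap.id_apply, inner_sub_left, inner_smul_left,
        Complex.conj_conj, huu, mul_one]
      ring
    have h1 : @inner ℂ H _ (S f) f = 1 := by
      rw [hSval f hf, ← hz, mul_inv_cancel₀ (sub_ne_zero.mpr hzw)]
    have h0 : @inner ℂ H _ (S g) g = 0 := by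
      rw [hSval g hg, ← hw, sub_self, zero_mul]
    obtain ⟨u, hu, hSu⟩ := th_core S g f hg hf h0 h1 a ha (by linarith)
    refine ⟨u, hu, ?_⟩
    have hv := hSval u hu
    rw [hSu] at hv
    have hne : (z - w) ≠ 0 := sub_ne_zero.mpr hzw
    have hTu : @inner ℂ H _ (T u) u = (a : ℂ) * (z - w) + w := by
      field_simp at hv
      linear_combination -hv
    rw [hTu]
    have hb' : (b : ℝ) = 1 - a := by linarith
    rw [hb']
    simp only [Complex.real_smul]
    push_cast
    ring
end

section
/- Let Ω ⊆ ℝ^N be compact and V : Ω → ℂ continuous. For λ ∉ Φ(V) := V(Ω) + [0,∞) (closure of range of V plus the nonnegative half-line), and any 0 < α < 1, there exists δ > 0 such that for every finite cover of Ω by sets S_1,...,S_M each of diameter at most δ, one has dist(λ, ⋃_j conv(Φ(V|_{S_j ∩ Ω}))) ≥ α · dist(λ, Φ(V)). -/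
/-- For continuous V on compact Ω and λ outside Φ(V), any sufficiently fine
cover of Ω keeps λ at distance at least α·dist(λ, Φ(V)) from the union of the
convex hulls of the local sets Φ(V|_{Sⱼ∩Ω}). -/
theorem stmt_16 {N : ℕ} (Ω : Set (EuclideanSpace ℝ (Fin N)))
    (hΩ : IsCompact Ω)
    (V : EuclideanSpace ℝ (Fin N) → ℂ) (hV : ContinuousOn V Ω)
    (Φ : Set (EuclideanSpace ℝ (Fin N)) → Set ℂ)
    (hΦ : Φ = fun S => {z : ℂ | ∃ w ∈ closure (V '' (S ∩ Ω)), ∃ t : ℝ, 0 ≤ t ∧ z = w + t})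
    (lam : ℂ) (hlam : 0 < Metric.infDist lam (Φ Set.univ))
    (α : ℝ) (hα0 : 0 < α) (hα1 : α < 1) :
    ∃ δ > (0:ℝ), ∀ (M : ℕ) (S : Fin M → Set (EuclideanSpace ℝ (Fin N))),
      (Ω ⊆ ⋃ j, S j) → (∀ j, EMetric.diam (S j) ≤ ENNReal.ofReal δ) →
      α * Metric.infDist lam (Φ Set.univ) ≤
        Metric.infDist lam (⋃ j, convexHull ℝ (Φ (S j))) := by
  set d := Metric.infDist lam (Φ Set.univ) with hd
  set ε := (1 - α) * d with hεdef
  have hε : 0 < ε := mul_pos (by linarith) hlam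
  -- Ω is nonempty
  have hΩne : Ω.Nonempty := by
    by_contra h
    rw [Set.not_nonempty_iff_eq_empty] at h
    have : Φ Set.univ = ∅ := by rw [hΦ]; simp [h]
    rw [hd, this, Metric.infDist_empty] at hlam
    exact lt_irrefl 0 hlam
  -- uniform continuity
  have hUC : UniformContinuousOn V Ω := hΩ.uniformContinuousOn_of_continuous hV
  rw [Metric.uniformContinuousOn_iff] at hUC
  obtain ⟨δ', hδ', hδ'prop⟩ := hUC ε hε
  refine ⟨δ' / 2, by positivity, ?_⟩
  intro M S hcover hdiam
  have key : ∀ j, ∀ z ∈ convexHull ℝ (Φ (S j)), α * d ≤ dist lam z := by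
    intro j z hz
    by_cases hSΩ : (S j ∩ Ω).Nonempty
    · obtain ⟨x₀, hx₀S, hx₀Ω⟩ := hSΩ
      set w₀ := V x₀ with hw₀
      have hdistV : ∀ x ∈ S j ∩ Ω, dist (V x) w₀ ≤ ε := by
        rintro x ⟨hxS, hxΩ⟩
        have h1 : edist x x₀ ≤ ENNReal.ofReal (δ' / 2) :=
          le_trans (EMetric.edist_le_diam_of_mem hxS hx₀S) (hdiam j)
        have h2 : dist x x₀ < δ' := by
          have := (edist_le_ofReal (by positivity)).mp h1
          linarith
        exact le_of_lt (hδ'prop x hxΩ x₀ hx₀Ω h2)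
      set C : Set ℂ := {z | ∃ t : ℝ, 0 ≤ t ∧ dist z (w₀ + t) ≤ ε} with hC
      have hCconv : Convex ℝ C := by
        rintro z₁ ⟨t₁, ht₁, h₁⟩ z₂ ⟨t₂, ht₂, h₂⟩ a b ha hb hab
        refine ⟨a * t₁ + b * t₂, by positivity, ?_⟩
        have hab' : (a : ℂ) + b = 1 := by exact_mod_cast hab
        have heq : a • z₁ + b • z₂ - (w₀ + ((a * t₁ + b * t₂ : ℝ) : ℂ)) =
            a • (z₁ - (w₀ + t₁)) + b • (z₂ - (w₀ + t₂)) := by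
          simp only [Complex.real_smul]
          push_cast
          linear_combination w₀ * hab'
        rw [dist_eq_norm, heq]
        calc ‖a • (z₁ - (w₀ + ↑t₁)) + b • (z₂ - (w₀ + ↑t₂))‖
            ≤ ‖a • (z₁ - (w₀ + ↑t₁))‖ + ‖b • (z₂ - (w₀ + ↑t₂))‖ := norm_add_le _ _
          _ = a * ‖z₁ - (w₀ + ↑t₁)‖ + b * ‖z₂ - (w₀ + ↑t₂)‖ := by
              rw [norm_smul, norm_smul, Real.norm_of_nonneg ha, Real.norm_of_nonneg hb]
          _ ≤ a * ε + b * ε := by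
              rw [dist_eq_norm] at h₁ h₂
              gcongr
          _ = ε := by rw [← add_mul, hab, one_mul]
      have hsub : Φ (S j) ⊆ C := by
        rw [hΦ]
        rintro z ⟨w, hw, t, ht, rfl⟩
        refine ⟨t, ht, ?_⟩
        have hwb : dist w w₀ ≤ ε := by
          have hcl : closure (V '' (S j ∩ Ω)) ⊆ Metric.closedBall w₀ ε :=
            closure_minimal (by rintro _ ⟨x, hx, rfl⟩; exact hdistV x hx)
              Metric.isClosed_closedBall
          exact hcl hw
        rw [dist_eq_norm] at hwb ⊢
        simpa [add_sub_add_right_eq_sub] using hwb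
      obtain ⟨t, ht, hzt⟩ := convexHull_min hsub hCconv hz
      have hmem : (w₀ + (t : ℂ)) ∈ Φ Set.univ := by
        rw [hΦ]
        exact ⟨w₀, subset_closure ⟨x₀, by simpa using hx₀Ω, rfl⟩, t, ht, rfl⟩
      have hdd : d ≤ dist lam (w₀ + (t : ℂ)) := Metric.infDist_le_dist_of_mem hmem
      have htri := dist_triangle lam z (w₀ + (t : ℂ))
      nlinarith [hzt, htri, hdd]
    · exfalso
      rw [Set.not_nonempty_iff_eq_empty] at hSΩ
      rw [hΦ] at hz
      simp [hSΩ] at hz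
  -- nonemptiness of the union
  obtain ⟨x₀, hx₀⟩ := hΩne
  obtain ⟨j₀, hj₀⟩ := Set.mem_iUnion.mp (hcover hx₀)
  have hne : (⋃ j, convexHull ℝ (Φ (S j))).Nonempty := by
    refine ⟨V x₀, Set.mem_iUnion.mpr ⟨j₀, subset_convexHull ℝ _ ?_⟩⟩
    rw [hΦ]
    exact ⟨V x₀, subset_closure ⟨x₀, ⟨hj₀, hx₀⟩, rfl⟩, 0, le_refl 0, by simp⟩
  by_contra hcon
  push_neg at hcon
  obtain ⟨z, hz, hzlt⟩ := (Metric.infDist_lt_iff hne).mp hcon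
  obtain ⟨j, hj⟩ := Set.mem_iUnion.mp hz
  exact absurd hzlt (not_lt.mpr (key j z hj))
end

section
/- Let A ⊆ ℂ be a nonempty closed set and let Φ = A + [0,∞) = {a + t : a ∈ A, t ≥ 0}. If diam(A) ≤ δ then for every λ ∉ Φ, dist(λ, conv(Φ)) ≥ dist(λ, Φ) - δ. -/
/-!
Since `[0, ∞)` is convex, `conv Φ = conv A + [0, ∞)`. A point `c + t` of it, with `c ∈ conv A`,
lies within `diam (conv A) = diam A ≤ δ` of the point `a + t ∈ Φ` for any `a ∈ A`, so the
Hausdorff distance between `Φ` and `conv Φ` is at most `δ`.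
-/

open Metric Set Pointwise

section ConvexHullAdd

variable {E : Type*} [NormedAddCommGroup E] [NormedSpace ℝ E] {A K : Set E}

theorem exists_mem_add_dist_le_diam_of_mem_convexHull_add (hK : Convex ℝ K)
    (hA : Bornology.IsBounded A) {z : E} (hz : z ∈ convexHull ℝ (A + K)) :
    ∃ y ∈ A + K, dist z y ≤ diam A := by
  rw [convexHull_add, hK.convexHull_eq] at hz
  obtain ⟨c, hc, k, hk, rfl⟩ := hz
  obtain ⟨a, ha⟩ := convexHull_nonempty_iff.mp ⟨c, hc⟩
  refine ⟨a + k, add_mem_add ha hk, ?_⟩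
  rw [dist_add_right, ← convexHull_diam]
  exact dist_le_diam_of_mem (isBounded_convexHull.mpr hA) hc (subset_convexHull ℝ A ha)

theorem hausdorffEDist_convexHull_add_le_ofReal_diam (hK : Convex ℝ K) (hA : Bornology.IsBounded A) :
    hausdorffEDist (convexHull ℝ (A + K)) (A + K) ≤ ENNReal.ofReal (diam A) := by
  refine hausdorffEDist_le_of_mem_edist (fun z hz ↦ ?_) (fun y hy ↦ ?_)
  · obtain ⟨y, hy, hd⟩ := exists_mem_add_dist_le_diam_of_mem_convexHull_add hK hA hz
    exact ⟨y, hy, edist_dist z y ▸ ENNReal.ofReal_le_ofReal hd⟩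
  · exact ⟨y, subset_convexHull ℝ _ hy, by simp⟩

theorem infDist_add_le_infDist_convexHull_add_diam (hK : Convex ℝ K)
    (hA : Bornology.IsBounded A) (x : E) :
    infDist x (A + K) ≤ infDist x (convexHull ℝ (A + K)) + diam A := by
  have hedist := hausdorffEDist_convexHull_add_le_ofReal_diam hK hA
  calc infDist x (A + K)
      ≤ infDist x (convexHull ℝ (A + K)) + hausdorffDist (convexHull ℝ (A + K)) (A + K) :=
        infDist_le_infDist_add_hausdorffDist (ne_top_of_le_ne_top ENNReal.ofReal_ne_top hedist)
    _ ≤ infDist x (convexHull ℝ (A + K)) + diam A := by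
        gcongr
        exact ENNReal.toReal_le_of_le_ofReal diam_nonneg hedist

end ConvexHullAdd

theorem convex_ofReal_image_Ici : Convex ℝ (Complex.ofReal '' Ici (0 : ℝ)) :=
  (convex_Ici 0).linear_image Complex.ofRealCLM.toLinearMap

theorem stmt_17_general (A : Set ℂ)
    (hAb : Bornology.IsBounded A) (δ : ℝ) (hδ : Metric.diam A ≤ δ)
    (Φ : Set ℂ) (hΦ : Φ = {z | ∃ a ∈ A, ∃ t : ℝ, 0 ≤ t ∧ z = a + t})
    (lam : ℂ) :
    Metric.infDist lam Φ - δ ≤ Metric.infDist lam (convexHull ℝ Φ) := by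
  have hΦ_add : Φ = A + Complex.ofReal '' Ici 0 := by
    ext z
    simp only [hΦ, mem_ofPred_eq, mem_add, mem_image, mem_Ici]
    grind
  have := infDist_add_le_infDist_convexHull_add_diam convex_ofReal_image_Ici hAb lam
  rw [← hΦ_add] at this
  linarith

/-- If A ⊆ ℂ is nonempty, closed and bounded with diam(A) ≤ δ and
Φ = A + [0,∞), then for λ ∉ Φ, dist(λ, conv Φ) ≥ dist(λ, Φ) - δ. -/
theorem stmt_17 (A : Set ℂ) (hA : A.Nonempty) (hAc : IsClosed A)
    (hAb : Bornology.IsBounded A) (δ : ℝ) (hδ : Metric.diam A ≤ δ)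
    (Φ : Set ℂ) (hΦ : Φ = {z | ∃ a ∈ A, ∃ t : ℝ, 0 ≤ t ∧ z = a + t})
    (lam : ℂ) (hlam : lam ∉ Φ) :
    Metric.infDist lam Φ - δ ≤ Metric.infDist lam (convexHull ℝ Φ) :=
  stmt_17_general A hAb δ hδ Φ hΦ lam
end
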